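/- (Lemma 2) Let μ̂_{i,m+1}(x_1,…,x_m,y) denote the SDMMSA estimate of the i-th mean computed from data (x_1,n_1),…,(x_m,n_m),(y,n_{m+1}). If Ȳ_1 ≤ Ȳ_2 ≤ … ≤ Ȳ_m and y < y', then for every i ∈ [1,m+1], μ̂_{i,m+1}(Ȳ_1,…,Ȳ_m,y) ≤ μ̂_{i,m+1}(Ȳ_1,…,Ȳ_m,y'). -/

import Mathlib

/-
The first block `[i₁, m+1]` of the procedure is the minimal maximiser of `j ↦ Ȳ_{j,m+1}`.
Raising the last value by `Δ` raises `Ȳ_{j,m+1}` by `n_{m+1} Δ / n_{j,m+1}`, which is largest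
for the shortest blocks, so `i₁` can only move right, to `i₁'`. Below `i₁` the remaining data `Ȳ_1 ≤ … ≤ Ȳ_m`
are monotone, and on monotone data the procedure returns the data themselves. It remains to
compare, for `i₁ ≤ i < i₁'`, the pooled mean of the old top block with `Ȳ_i`: since `[i₁, m+1]`
beats `[i+1, m+1]`, its mean is at most that of `[i₁, i]`, which is at most `Ȳ_i`.
-/

open Finset

noncomputable section SDMMSA

/-- Pooled weight `n_{i,j} = ∑_{h=i}^j n_h`. -/
def pooledWeight (n : ℕ → ℝ) (i j : ℕ) : ℝ := ∑ h ∈ Finset.Icc i j, n h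

/-- Pooled (weighted) mean `Ȳ_{i,j} = (∑_{h=i}^j n_h Y_h) / n_{i,j}`. -/
def pooledMean (n Y : ℕ → ℝ) (i j : ℕ) : ℝ :=
  (∑ h ∈ Finset.Icc i j, n h * Y h) / pooledWeight n i j

/-- The first SDMMSA index for the data `(Y_1,n_1),…,(Y_t,n_t)`:
the smallest `j ∈ [1,t]` at which `Ȳ_{j,t} = max_{1 ≤ j' ≤ t} Ȳ_{j',t}`. -/
def firstIdx (n Y : ℕ → ℝ) (t : ℕ) : ℕ :=
  sInf {j | 1 ≤ j ∧ j ≤ t ∧ ∀ j', 1 ≤ j' → j' ≤ t → pooledMean n Y j' t ≤ pooledMean n Y j t}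

/-- Fuel-based recursion implementing the SDMMSA step-down procedure: on data range `[1,t]`,
every `i ≥ i₁ = firstIdx n Y t` gets the pooled mean `Ȳ_{i₁,t}` of the top block, and for
`i < i₁` we recurse on the data range `[1, i₁ - 1]`.  A fuel of `t` suffices since the
range shrinks strictly at each step. -/
def sdmmsaAux (n Y : ℕ → ℝ) : ℕ → ℕ → ℕ → ℝ
  | 0, _, _ => 0
  | fuel + 1, t, i =>
      if firstIdx n Y t ≤ i then pooledMean n Y (firstIdx n Y t) t
      else sdmmsaAux n Y fuel (firstIdx n Y t - 1) i

/-- `muhat n Y k i` is the SDMMSA estimate `μ̂_i` computed from the data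
`(Y_1,n_1),…,(Y_k,n_k)`. -/
def muhat (n Y : ℕ → ℝ) (k i : ℕ) : ℝ := sdmmsaAux n Y k k i

/-- The SDMMSA indices `i_u` computed from the data `(Y_1,n_1),…,(Y_k,n_k)`:
`sdIdx n Y k 0 = i_0 = k+1` and `i_{u+1}` is the first SDMMSA index of `[1, i_u - 1]`. -/
def sdIdx (n Y : ℕ → ℝ) (k : ℕ) : ℕ → ℕ
  | 0 => k + 1
  | u + 1 => firstIdx n Y (sdIdx n Y k u - 1)

/-- The number of steps `h` of the SDMMSA: the first `u` with `i_u = 1`. -/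
def sdSteps (n Y : ℕ → ℝ) (k : ℕ) : ℕ := sInf {u | sdIdx n Y k u = 1}

end SDMMSA

/-- Mediant inequality. -/
lemma add_div_add_le_div_of_div_le {S₁ S₂ W₁ W₂ : ℝ} (hW₁ : 0 < W₁) (hW₂ : 0 < W₂)
    (h : S₂ / W₂ ≤ (S₁ + S₂) / (W₁ + W₂)) :
    (S₁ + S₂) / (W₁ + W₂) ≤ S₁ / W₁ := by
  rw [div_le_div_iff₀ (by linarith) hW₁]
  rw [div_le_div_iff₀ hW₂ (by linarith)] at h
  nlinarith

section PooledMean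

variable {n Z : ℕ → ℝ}

lemma sum_Icc_split (f : ℕ → ℝ) {a i c : ℕ} (hai : a ≤ i) (hic : i < c) :
    ∑ h ∈ Icc a c, f h = ∑ h ∈ Icc a i, f h + ∑ h ∈ Icc (i + 1) c, f h := by
  simp only [← Ico_add_one_right_eq_Icc]
  exact (sum_Ico_consecutive f (by omega) (by omega)).symm

lemma pooledWeight_pos {i j : ℕ} (hij : i ≤ j) (hn : ∀ h ∈ Set.Icc i j, 0 < n h) :
    0 < pooledWeight n i j :=
  sum_pos (fun h hh => hn h (mem_Icc.mp hh)) ⟨i, mem_Icc.mpr ⟨le_rfl, hij⟩⟩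

lemma pooledWeight_lt_of_lt {a a' t : ℕ} (ha' : a' < a) (hat : a ≤ t)
    (hn : ∀ h ∈ Set.Icc a' t, 0 < n h) : pooledWeight n a t < pooledWeight n a' t := by
  refine sum_lt_sum_of_subset (i := a') ?_ ?_ ?_ ?_ ?_
  · exact Icc_subset_Icc_left ha'.le
  · exact mem_Icc.mpr ⟨le_rfl, by omega⟩
  · simp only [mem_Icc]; omega
  · exact hn a' ⟨le_rfl, by omega⟩
  · exact fun h hh _ => (hn h (mem_Icc.mp hh)).le

lemma pooledMean_self (Z : ℕ → ℝ) {t : ℕ} (ht : n t ≠ 0) : pooledMean n Z t t = Z t := by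
  simp only [pooledMean, pooledWeight, Icc_self, sum_singleton]
  field_simp

lemma pooledMean_le_of_forall_le {i j : ℕ} {c : ℝ} (hij : i ≤ j)
    (hn : ∀ h ∈ Set.Icc i j, 0 < n h) (hZ : ∀ h ∈ Set.Icc i j, Z h ≤ c) :
    pooledMean n Z i j ≤ c := by
  rw [pooledMean, div_le_iff₀ (pooledWeight_pos hij hn), pooledWeight, mul_sum]
  refine sum_le_sum fun h hh => ?_
  rw [mul_comm c]
  exact mul_le_mul_of_nonneg_left (hZ h (mem_Icc.mp hh)) (hn h (mem_Icc.mp hh)).le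

lemma pooledMean_le_left_of_right_le {a i t : ℕ} (hai : a ≤ i) (hit : i < t)
    (hn : ∀ h ∈ Set.Icc a t, 0 < n h) (h : pooledMean n Z (i + 1) t ≤ pooledMean n Z a t) :
    pooledMean n Z a t ≤ pooledMean n Z a i := by
  have hsplit : pooledMean n Z a t = (∑ h ∈ Icc a i, n h * Z h
      + ∑ h ∈ Icc (i + 1) t, n h * Z h) / (pooledWeight n a i + pooledWeight n (i + 1) t) := by
    rw [pooledMean, sum_Icc_split _ hai hit, pooledWeight, sum_Icc_split _ hai hit]; rfl
  rw [hsplit] at h ⊢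
  exact add_div_add_le_div_of_div_le
    (pooledWeight_pos hai fun h ⟨hah, hhi⟩ => hn h ⟨hah, by omega⟩)
    (pooledWeight_pos hit fun h ⟨hih, hht⟩ => hn h ⟨by omega, hht⟩) h

lemma pooledMean_eq_add_of_eq_below {Z' : ℕ → ℝ} {j t : ℕ} (hjt : j ≤ t)
    (hZ : ∀ h < t, Z h = Z' h) :
    pooledMean n Z' j t = pooledMean n Z j t + n t * (Z' t - Z t) / pooledWeight n j t := by
  have hdiff : ∑ h ∈ Icc j t, (n h * Z' h - n h * Z h) = n t * (Z' t - Z t) := by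
    rw [sum_eq_single_of_mem t (mem_Icc.mpr ⟨hjt, le_rfl⟩)]
    · ring
    · intro h hh hht
      rw [hZ h (lt_of_le_of_ne (mem_Icc.mp hh).2 hht), sub_self]
  rw [sum_sub_distrib] at hdiff
  rw [pooledMean, pooledMean, ← add_div, ← hdiff, add_sub_cancel]

end PooledMean

section StepDown

variable {n Z : ℕ → ℝ}

lemma firstIdx_spec (n Z : ℕ → ℝ) {t : ℕ} (ht : 1 ≤ t) :
    firstIdx n Z t ∈ Set.Icc 1 t ∧
      ∀ j ∈ Set.Icc 1 t, pooledMean n Z j t ≤ pooledMean n Z (firstIdx n Z t) t := by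
  obtain ⟨b, hb, hmax⟩ := exists_max_image (Icc 1 t) (fun j => pooledMean n Z j t)
    ⟨t, mem_Icc.mpr ⟨ht, le_rfl⟩⟩
  have hne : {j | 1 ≤ j ∧ j ≤ t ∧ ∀ j', 1 ≤ j' → j' ≤ t →
      pooledMean n Z j' t ≤ pooledMean n Z j t}.Nonempty :=
    ⟨b, (mem_Icc.mp hb).1, (mem_Icc.mp hb).2,
      fun j' h1 h2 => hmax j' (mem_Icc.mpr ⟨h1, h2⟩)⟩
  obtain ⟨h1, h2, hspec⟩ := Nat.sInf_mem hne
  exact ⟨⟨h1, h2⟩, fun j hj => hspec j hj.1 hj.2⟩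

lemma pooledMean_firstIdx_le {t i : ℕ} (hi : 1 ≤ i) (hai : firstIdx n Z t ≤ i) (hit : i ≤ t)
    (hn : ∀ h ∈ Set.Icc 1 t, 0 < n h) (hZ : MonotoneOn Z (Set.Icc (firstIdx n Z t) i)) :
    pooledMean n Z (firstIdx n Z t) t ≤ Z i := by
  obtain ⟨⟨ha1, -⟩, hmax⟩ := firstIdx_spec n Z (hi.trans hit)
  have hn' : ∀ h ∈ Set.Icc (firstIdx n Z t) t, 0 < n h :=
    fun h hh => hn h ⟨ha1.trans hh.1, hh.2⟩
  have hbound : pooledMean n Z (firstIdx n Z t) i ≤ Z i :=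
    pooledMean_le_of_forall_le hai (fun h ⟨hah, hhi⟩ => hn' h ⟨hah, hhi.trans hit⟩)
      (fun h hh => hZ hh ⟨hai, le_rfl⟩ hh.2)
  rcases hit.eq_or_lt with rfl | hlt
  · exact hbound
  · exact (pooledMean_le_left_of_right_le hai hlt hn' (hmax (i + 1) ⟨by omega, hlt⟩)).trans
      hbound

/-- On nondecreasing data every block found by the procedure is constant. -/
lemma sdmmsaAux_eq_of_monotoneOn {fuel t i : ℕ} (hfuel : t ≤ fuel) (hi : i ∈ Set.Icc 1 t)
    (hn : ∀ h ∈ Set.Icc 1 t, 0 < n h) (hZ : MonotoneOn Z (Set.Icc 1 t)) :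
    sdmmsaAux n Z fuel t i = Z i := by
  induction fuel generalizing t with
  | zero => have := hi.1.trans (hi.2.trans hfuel); omega
  | succ fuel ih =>
    have ht : 1 ≤ t := hi.1.trans hi.2
    obtain ⟨⟨ha1, hat⟩, hmax⟩ := firstIdx_spec n Z ht
    rw [sdmmsaAux]
    split_ifs with hai
    · refine le_antisymm
        (pooledMean_firstIdx_le hi.1 hai hi.2 hn (hZ.mono (Set.Icc_subset_Icc ha1 hi.2))) ?_
      calc Z i ≤ Z t := hZ hi ⟨ht, le_rfl⟩ hi.2
        _ = pooledMean n Z t t := (pooledMean_self Z (hn t ⟨ht, le_rfl⟩).ne').symm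
        _ ≤ pooledMean n Z (firstIdx n Z t) t := hmax t ⟨ht, le_rfl⟩
    · exact ih (by omega) ⟨hi.1, by omega⟩ (fun h ⟨h1, hh⟩ => hn h ⟨h1, by omega⟩)
        (hZ.mono (Set.Icc_subset_Icc_right (by omega)))

lemma pooledMean_lt_of_lt_last {Z' : ℕ → ℝ} {j t : ℕ} (hZ : ∀ h < t, Z h = Z' h)
    (hlt : Z t < Z' t) (hjt : j ≤ t) (hn : ∀ h ∈ Set.Icc j t, 0 < n h) :
    pooledMean n Z j t < pooledMean n Z' j t := by
  rw [pooledMean_eq_add_of_eq_below hjt hZ]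
  exact lt_add_of_pos_right _ <|
    div_pos (mul_pos (hn t ⟨hjt, le_rfl⟩) (sub_pos.2 hlt)) (pooledWeight_pos hjt hn)

lemma firstIdx_le_firstIdx_of_lt_last {Z' : ℕ → ℝ} {t : ℕ} (hZ : ∀ h < t, Z h = Z' h)
    (hlt : Z t < Z' t) (ht : 1 ≤ t) (hn : ∀ h ∈ Set.Icc 1 t, 0 < n h) :
    firstIdx n Z t ≤ firstIdx n Z' t := by
  obtain ⟨⟨ha1, hat⟩, hmax⟩ := firstIdx_spec n Z ht
  obtain ⟨⟨ha1', hat'⟩, hmax'⟩ := firstIdx_spec n Z' ht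
  by_contra! ha'
  have hc : 0 < n t * (Z' t - Z t) := mul_pos (hn t ⟨ht, le_rfl⟩) (sub_pos.2 hlt)
  have hshorter := div_lt_div_of_pos_left hc
    (pooledWeight_pos hat fun h hh => hn h ⟨ha1.trans hh.1, hh.2⟩)
    (pooledWeight_lt_of_lt ha' hat fun h hh => hn h ⟨ha1'.trans hh.1, hh.2⟩)
  have h₁ := hmax (firstIdx n Z' t) ⟨ha1', hat'⟩
  have h₂ := hmax' (firstIdx n Z t) ⟨ha1, hat⟩
  rw [pooledMean_eq_add_of_eq_below hat hZ, pooledMean_eq_add_of_eq_below hat' hZ] at h₂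
  linarith

lemma muhat_succ_of_firstIdx_le {m i : ℕ} (hai : firstIdx n Z (m + 1) ≤ i) :
    muhat n Z (m + 1) i = pooledMean n Z (firstIdx n Z (m + 1)) (m + 1) := by
  rw [muhat, sdmmsaAux, if_pos hai]

lemma muhat_succ_of_lt_firstIdx {m i : ℕ} (hi : 1 ≤ i) (hia : i < firstIdx n Z (m + 1))
    (hn : ∀ h ∈ Set.Icc 1 m, 0 < n h) (hZ : MonotoneOn Z (Set.Icc 1 m)) :
    muhat n Z (m + 1) i = Z i := by
  have hat := (firstIdx_spec n Z (Nat.le_add_left 1 m)).1.2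
  rw [muhat, sdmmsaAux, if_neg (not_le.mpr hia)]
  exact sdmmsaAux_eq_of_monotoneOn (by omega) ⟨hi, by omega⟩
    (fun h ⟨h1, hh⟩ => hn h ⟨h1, by omega⟩) (hZ.mono (Set.Icc_subset_Icc_right (by omega)))

end StepDown

theorem sdmmsa_monotone_in_last_general (m : ℕ) (n Y : ℕ → ℝ)
    (hn : ∀ h, 1 ≤ h → h ≤ m + 1 → 0 < n h)
    (hY : ∀ v v', 1 ≤ v → v ≤ v' → v' ≤ m → Y v ≤ Y v')
    (y y' : ℝ) (hyy' : y < y') :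
    ∀ i, 1 ≤ i → i ≤ m + 1 →
      muhat n (fun t => if t = m + 1 then y else Y t) (m + 1) i ≤
        muhat n (fun t => if t = m + 1 then y' else Y t) (m + 1) i := by
  intro i hi1 hi2
  have hmono (c : ℝ) : MonotoneOn (fun t => if t = m + 1 then c else Y t) (Set.Icc 1 m) :=
    fun v ⟨hv1, _⟩ v' ⟨_, hv'm⟩ hvv' => by
      simpa [show v ≠ m + 1 by omega, show v' ≠ m + 1 by omega] using hY v v' hv1 hvv' hv'm
  set Z₁ : ℕ → ℝ := fun t => if t = m + 1 then y else Y t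
  set Z₂ : ℕ → ℝ := fun t => if t = m + 1 then y' else Y t
  have hagree : ∀ h < m + 1, Z₁ h = Z₂ h := fun h hh => by simp [Z₁, Z₂, hh.ne]
  have hlast : Z₁ (m + 1) < Z₂ (m + 1) := by simpa [Z₁, Z₂] using hyy'
  have hn' : ∀ h ∈ Set.Icc 1 (m + 1), 0 < n h := fun h hh => hn h hh.1 hh.2
  have hnm : ∀ h ∈ Set.Icc 1 m, 0 < n h := fun h hh => hn h hh.1 (hh.2.trans m.le_succ)
  have haa' := firstIdx_le_firstIdx_of_lt_last hagree hlast (Nat.le_add_left 1 m) hn'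
  obtain ⟨⟨ha1, hat⟩, -⟩ := firstIdx_spec n Z₁ (Nat.le_add_left 1 m)
  obtain ⟨⟨-, hat'⟩, hmax'⟩ := firstIdx_spec n Z₂ (Nat.le_add_left 1 m)
  rcases lt_or_ge i (firstIdx n Z₁ (m + 1)) with hia | hai
  · rw [muhat_succ_of_lt_firstIdx hi1 hia hnm (hmono y),
      muhat_succ_of_lt_firstIdx hi1 (hia.trans_le haa') hnm (hmono y'), hagree i (by omega)]
  rcases lt_or_ge i (firstIdx n Z₂ (m + 1)) with hia' | hai'
  · rw [muhat_succ_of_firstIdx_le hai, muhat_succ_of_lt_firstIdx hi1 hia' hnm (hmono y'),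
      ← hagree i (by omega)]
    exact pooledMean_firstIdx_le hi1 hai hi2 hn'
      ((hmono y).mono (Set.Icc_subset_Icc ha1 (by omega)))
  · rw [muhat_succ_of_firstIdx_le hai, muhat_succ_of_firstIdx_le hai']
    have hna : ∀ h ∈ Set.Icc (firstIdx n Z₁ (m + 1)) (m + 1), 0 < n h :=
      fun h hh => hn' h ⟨ha1.trans hh.1, hh.2⟩
    exact (pooledMean_lt_of_lt_last hagree hlast hat hna).le.trans (hmax' _ ⟨ha1, hat⟩)

/-- Lemma 2: if `Ȳ_1 ≤ … ≤ Ȳ_m` and `y < y'`, then for every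
`i ∈ [1, m+1]`, `μ̂_{i,m+1}(Ȳ_1,…,Ȳ_m,y) ≤ μ̂_{i,m+1}(Ȳ_1,…,Ȳ_m,y')`. -/
theorem sdmmsa_monotone_in_last (m : ℕ) (hm : 1 ≤ m) (n Y : ℕ → ℝ)
    (hn : ∀ h, 1 ≤ h → h ≤ m + 1 → 0 < n h)
    (hY : ∀ v v', 1 ≤ v → v ≤ v' → v' ≤ m → Y v ≤ Y v')
    (y y' : ℝ) (hyy' : y < y') :
    ∀ i, 1 ≤ i → i ≤ m + 1 →
      muhat n (fun t => if t = m + 1 then y else Y t) (m + 1) i ≤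
        muhat n (fun t => if t = m + 1 then y' else Y t) (m + 1) i :=
  sdmmsa_monotone_in_last_general m n Y hn hY y y' hyy'
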